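/- For every Kreweras word w of length 3n (n ≥ 1), the promotion pro(w) is again a Kreweras word of length 3n, and the map pro is a bijection from the set of Kreweras words of length 3n to itself. -/

import Mathlib

/-- The three letters of a Kreweras word. -/
inductive KLetter : Type
  | A | B | C
deriving DecidableEq, Repr

open KLetter

/-- `w` is a Kreweras word of length `3 * n`: it has `n` `A`'s, `n` `B`'s, `n` `C`'s,
and every prefix has at least as many `A`'s as `B`'s and at least as many `A`'s as `C`'s. -/
def IsKrewerasWord (n : ℕ) (w : List KLetter) : Prop :=
  w.length = 3 * n ∧ w.count A = n ∧ w.count B = n ∧ w.count C = n ∧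
  ∀ k : ℕ, (w.take k).count B ≤ (w.take k).count A ∧
           (w.take k).count C ≤ (w.take k).count A

/-- `kiota w` is the smallest index `ι ≥ 1` (1-indexed) such that the prefix of
length `ι` of `w` has equally many `A`'s as `B`'s, or equally many `A`'s as `C`'s
(and `0` if no such index exists). -/
def kiota (w : List KLetter) : ℕ :=
  (((List.range (w.length + 1)).filter fun k =>
      decide (1 ≤ k) &&
      (((w.take k).count A == (w.take k).count B) ||
       ((w.take k).count A == (w.take k).count C))).headD 0)

/-- Promotion of a Kreweras word:
`pro w = (w₂, …, w_{ι-1}, A, w_{ι+1}, …, w_{3n}, w_ι)` where `ι = kiota w`. -/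
def pro (w : List KLetter) : List KLetter :=
  ((w.drop 1).set (kiota w - 2) A) ++ [w.getD (kiota w - 1) A]

/-- The trip permutation `σ_w` of a Kreweras word of length `3 * n`, as a function on
1-indexed positions: `σ_w i` is the unique element of `{1, …, 3n}` congruent to
`kiota (pro^[i-1] w) + i - 1` modulo `3 * n`. -/
def ksigma (n : ℕ) (w : List KLetter) (i : ℕ) : ℕ :=
  (kiota (pro^[i - 1] w) + i - 2) % (3 * n) + 1

/-- `keps w i` is the letter of `pro^[i-1] w` in (1-indexed) position `kiota (pro^[i-1] w)`. -/
def keps (w : List KLetter) (i : ℕ) : KLetter :=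
  (pro^[i - 1] w).getD (kiota (pro^[i - 1] w) - 1) A

/-- The negation swapping `B` and `C` (and fixing `A`). -/
def negL : KLetter → KLetter
  | A => A
  | B => C
  | C => B

open Classical in
/-- The involution `τ_i` on Kreweras words of length `3 * n`: swap the letters in
(1-indexed) positions `i` and `i + 1` if the result is again a Kreweras word,
and otherwise do nothing. -/
noncomputable def tau (n i : ℕ) (w : List KLetter) : List KLetter :=
  let w' := (w.set (i - 1) (w.getD i A)).set i (w.getD (i - 1) A)
  if IsKrewerasWord n w' then w' else w

/-- `tauDown n j = τ_j ∘ τ_{j-1} ∘ ⋯ ∘ τ_1`. -/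
noncomputable def tauDown (n : ℕ) : ℕ → List KLetter → List KLetter
  | 0, w => w
  | j + 1, w => tau n (j + 1) (tauDown n j w)

/-- `evacAux n j = (tauDown n 1) ∘ (tauDown n 2) ∘ ⋯ ∘ (tauDown n j)`. -/
noncomputable def evacAux (n : ℕ) : ℕ → List KLetter → List KLetter
  | 0, w => w
  | j + 1, w => evacAux n j (tauDown n (j + 1) w)

/-- Evacuation on Kreweras words of length `3 * n`:
`evac = (τ_1) ∘ (τ_2 ∘ τ_1) ∘ ⋯ ∘ (τ_{3n-1} ∘ ⋯ ∘ τ_2 ∘ τ_1)`. -/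
noncomputable def evac (n : ℕ) (w : List KLetter) : List KLetter :=
  evacAux n (3 * n - 1) w

/-- `tauAsc n k c = τ_{k+c-1} ∘ ⋯ ∘ τ_{k+1} ∘ τ_k`. -/
noncomputable def tauAsc (n k : ℕ) : ℕ → List KLetter → List KLetter
  | 0, w => w
  | j + 1, w => tau n (k + j) (tauAsc n k j w)

/-- `evacStarAux n j = (tauAsc n 1 (3n-1)) ∘ (tauAsc n 2 (3n-2)) ∘ ⋯ ∘ (tauAsc n j (3n-j))`. -/
noncomputable def evacStarAux (n : ℕ) : ℕ → List KLetter → List KLetter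
  | 0, w => w
  | j + 1, w => evacStarAux n j (tauAsc n (j + 1) (3 * n - (j + 1)) w)

/-- Dual evacuation on Kreweras words of length `3 * n`:
`evac* = (τ_{3n-1} ∘ ⋯ ∘ τ_1) ∘ (τ_{3n-1} ∘ ⋯ ∘ τ_2) ∘ ⋯ ∘ (τ_{3n-1})`. -/
noncomputable def evacStar (n : ℕ) (w : List KLetter) : List KLetter :=
  evacStarAux n (3 * n - 1) w

/-- The three-element "V"-shaped poset: `a < b`, `a < c`, with `b`, `c` incomparable. -/
inductive VP : Type
  | a | b | c
deriving DecidableEq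

instance : PartialOrder VP where
  le x y := x = y ∨ x = VP.a
  le_refl x := Or.inl rfl
  le_trans x y z hxy hyz := by
    rcases hxy with rfl | rfl
    · exact hyz
    · exact Or.inr rfl
  le_antisymm x y hxy hyx := by
    rcases hxy with rfl | rfl
    · rfl
    · rcases hyx with rfl | rfl <;> rfl

/-- The labeling of elements of `V(n) = VP × Fin n` by letters. -/
def vlabel {n : ℕ} (p : VP × Fin n) : KLetter :=
  match p.1 with
  | VP.a => A
  | VP.b => B
  | VP.c => C

/-- `L` is a linear extension of `V(n) = VP × Fin n` (with the product order):
a list of all elements of `V(n)`, each appearing once, such that `L_i ≤ L_j`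
implies `i ≤ j`. -/
def IsLinearExtension (n : ℕ) (L : List (VP × Fin n)) : Prop :=
  L.Nodup ∧ (∀ p : VP × Fin n, p ∈ L) ∧
  ∀ i j : Fin L.length, L.get i ≤ L.get j → (i : ℕ) ≤ (j : ℕ)

/-- A connected Kreweras word: a Kreweras word of length `3 * n` having no proper
nonempty consecutive substring which is itself a Kreweras word. -/
def ConnectedKrewerasWord (n : ℕ) (w : List KLetter) : Prop :=
  IsKrewerasWord n w ∧
  ∀ (u : List KLetter) (m : ℕ), u <:+: w → u ≠ [] → u ≠ w → ¬ IsKrewerasWord m u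

/-!
A Kreweras word of positive length factors as `w = A p X s` with `X ∈ {B, C}`, where every
prefix of `p` has at least as many `A`s as `B`s and as `C`s, and `p` has as many `X`s as `A`s
(cut `w` at its first return). Then `ι(w) = |p| + 2` and `pro w = p A s X`, a permutation of `w`
whose prefixes are still dominated by `A`. Conversely `w` is recovered from `pro w`: `X` is its
last letter, and `p` is the only prefix followed by `A` that has as many `X`s as `A`s, since a
longer one would give a prefix of `w` with more `X`s than `A`s. An injective self-map of a finite
set is a bijection.
-/
theorem List.headD_filter_range_eq {q : ℕ → Bool} {N k : ℕ} (hk : k < N) (hqk : q k = true)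
    (hmin : ∀ m < k, q m = false) : ((range N).filter q).headD 0 = k := by
  obtain ⟨d, rfl⟩ := Nat.exists_eq_add_of_lt hk
  rw [show k + d + 1 = k + (d + 1) by omega, range_add, filter_append,
    filter_eq_nil_iff.mpr fun m hm => by simp [hmin m (mem_range.mp hm)], nil_append,
    range_succ_eq_map]
  simp [hqk]

theorem List.exists_eq_append_cons_of_not {α : Type*} (P : List α → Prop) (hnil : P [])
    {l : List α} (hl : ¬ P l) :
    ∃ p x s, l = p ++ x :: s ∧ (∀ k, P (p.take k)) ∧ ¬ P (p ++ [x]) := by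
  induction l generalizing P with
  | nil => exact absurd hnil hl
  | cons a l ih =>
    by_cases ha : P [a]
    · obtain ⟨p, x, s, rfl, hp, hpx⟩ := ih (fun u => P (a :: u)) ha hl
      refine ⟨a :: p, x, s, rfl, fun k => ?_, hpx⟩
      cases k with
      | zero => exact hnil
      | succ k => exact hp k
    · exact ⟨[], a, l, rfl, by simpa, ha⟩

namespace KLetter

def IsDominated (u : List KLetter) : Prop :=
  u.count B ≤ u.count A ∧ u.count C ≤ u.count A

def IsBallot (u : List KLetter) : Prop :=
  ∀ k, IsDominated (u.take k)

instance : Fintype KLetter :=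
  Fintype.ofList [A, B, C] (by intro x; cases x <;> simp)

lemma IsDominated.of_perm {u v : List KLetter} (hu : IsDominated u) (h : u.Perm v) :
    IsDominated v := by
  simpa only [IsDominated, h.count_eq] using hu

lemma IsBallot.isDominated_of_prefix {u v : List KLetter} (hv : IsBallot v) (h : u <+: v) :
    IsDominated u := by
  rw [List.prefix_iff_eq_take.mp h]
  exact hv _

lemma IsBallot.append_singleton {u : List KLetter} {x : KLetter} (hu : IsBallot u)
    (hux : IsDominated (u ++ [x])) : IsBallot (u ++ [x]) := by
  intro k
  rw [List.take_append]
  rcases Nat.lt_or_ge k (u.length + 1) with hk | hk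
  · rw [Nat.sub_eq_zero_of_le (by omega)]
    simpa using hu k
  · rwa [List.take_of_length_le (by omega), List.take_of_length_le (by simp; omega)]

lemma count_ne_of_isBallot {p r t : List KLetter} {X : KLetter} (hX : X ≠ A)
    (hw : IsBallot (A :: (p ++ X :: (r ++ t)))) (hp : p.count X = p.count A) :
    (p ++ A :: r).count X ≠ (p ++ A :: r).count A := by
  have := hw.isDominated_of_prefix (u := A :: (p ++ X :: r)) (by simp)
  cases X <;> simp_all [IsDominated] <;> omega

lemma eq_of_append_cons_eq {p s p' s' : List KLetter} {X : KLetter} (hX : X ≠ A)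
    (hw : IsBallot (A :: (p ++ X :: s))) (hw' : IsBallot (A :: (p' ++ X :: s')))
    (hp : p.count X = p.count A) (hp' : p'.count X = p'.count A)
    (h : p ++ A :: s = p' ++ A :: s') : p = p' ∧ s = s' := by
  rcases List.append_eq_append_iff.mp h with ⟨_ | ⟨a, r⟩, rfl, hs⟩ | ⟨_ | ⟨a, r⟩, rfl, hs⟩
  · simp_all
  · obtain ⟨rfl, rfl⟩ := List.cons_eq_cons.mp hs
    exact absurd hp' (count_ne_of_isBallot hX hw hp)
  · simp_all
  · obtain ⟨rfl, rfl⟩ := List.cons_eq_cons.mp hs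
    exact absurd hp (count_ne_of_isBallot hX hw' hp')

lemma exists_first_return {t : List KLetter} (ht : IsBallot (A :: t)) (hnt : ¬ IsDominated t) :
    ∃ p X s, X ≠ A ∧ t = p ++ X :: s ∧ IsBallot p ∧ p.count X = p.count A := by
  obtain ⟨p, X, s, rfl, hp, hpX⟩ :=
    List.exists_eq_append_cons_of_not IsDominated (by simp [IsDominated]) hnt
  have hApX := ht.isDominated_of_prefix (u := A :: (p ++ [X])) (by simp)
  have hpA : IsDominated p := by simpa using hp p.length
  refine ⟨p, X, s, ?_, rfl, hp, ?_⟩ <;> cases X <;> simp_all [IsDominated] <;> omega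

lemma kiota_cons_append {p s : List KLetter} {X : KLetter} (hX : X ≠ A) (hp : IsBallot p)
    (hpX : p.count X = p.count A) : kiota (A :: (p ++ X :: s)) = p.length + 2 := by
  unfold kiota
  apply List.headD_filter_range_eq (by simp)
  · have : (A :: (p ++ X :: s)).take (p.length + 2) = A :: (p ++ [X]) := by
      simp [List.take_append]
    rw [this]
    cases X <;> simp_all
  · intro m hm
    match m with
    | 0 => simp
    | i + 1 =>
      have := hp i
      rw [List.take_succ_cons, List.take_append_of_le_length (by omega)]
      grind [IsDominated]

lemma pro_cons_append {p s : List KLetter} {X : KLetter} (hX : X ≠ A) (hp : IsBallot p)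
    (hpX : p.count X = p.count A) : pro (A :: (p ++ X :: s)) = p ++ A :: s ++ [X] := by
  rw [pro, kiota_cons_append hX hp hpX]
  simp

lemma perm_promote (p s : List KLetter) (X : KLetter) :
    (A :: (p ++ X :: s)).Perm (p ++ A :: s ++ [X]) := by
  rw [List.perm_iff_count]
  grind

lemma IsBallot.promote {p s : List KLetter} {X : KLetter} (hX : X ≠ A)
    (hw : IsBallot (A :: (p ++ X :: s))) (hp : IsBallot p) : IsBallot (p ++ A :: s ++ [X]) := by
  refine IsBallot.append_singleton (fun k => ?_) ((hw (p.length + s.length + 2)).of_perm ?_)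
  · rw [List.take_append]
    cases h : k - p.length with
    | zero => simpa using hp k
    | succ m =>
      rw [List.take_of_length_le (by omega)]
      have := hw.isDominated_of_prefix (u := A :: (p ++ X :: s.take m))
        (by simp [List.prefix_append_right_inj, List.take_prefix])
      cases X <;> simp_all [IsDominated] <;> omega
  · rw [List.take_of_length_le (by simp; omega)]
    exact perm_promote p s X

end KLetter

open KLetter

lemma IsKrewerasWord.isBallot {n : ℕ} {w : List KLetter} (hw : IsKrewerasWord n w) :
    IsBallot w :=
  hw.2.2.2.2

lemma IsKrewerasWord.exists_eq_cons_append {n : ℕ} {w : List KLetter} (hn : 1 ≤ n)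
    (hw : IsKrewerasWord n w) :
    ∃ p X s, X ≠ A ∧ w = A :: (p ++ X :: s) ∧ IsBallot p ∧ p.count X = p.count A := by
  obtain ⟨hlen, hA, hB, -, hball⟩ := hw
  obtain _ | ⟨c, t⟩ := w
  · simp only [List.length_nil] at hlen; omega
  obtain rfl : c = A := by
    have := hball 1
    cases c <;> simp_all
  have hnt : ¬ IsDominated t := by
    grind [IsDominated]
  obtain ⟨p, X, s, hX, rfl, hp, hpX⟩ := exists_first_return hball hnt
  exact ⟨p, X, s, hX, rfl, hp, hpX⟩

lemma IsKrewerasWord.pro {n : ℕ} {w : List KLetter} (hn : 1 ≤ n) (hw : IsKrewerasWord n w) :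
    IsKrewerasWord n (pro w) := by
  obtain ⟨p, X, s, hX, rfl, hp, hpX⟩ := hw.exists_eq_cons_append hn
  have hperm := perm_promote p s X
  obtain ⟨hlen, hA, hB, hC, hball⟩ := hw
  rw [pro_cons_append hX hp hpX]
  exact ⟨hperm.length_eq ▸ hlen, hperm.count_eq A ▸ hA, hperm.count_eq B ▸ hB,
    hperm.count_eq C ▸ hC, IsBallot.promote hX hball hp⟩

lemma pro_injOn {n : ℕ} (hn : 1 ≤ n) : Set.InjOn pro {w | IsKrewerasWord n w} := by
  intro w hw w' hw' h
  obtain ⟨p, X, s, hX, rfl, hp, hpX⟩ := IsKrewerasWord.exists_eq_cons_append hn hw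
  obtain ⟨p', X', s', hX', rfl, hp', hpX'⟩ := IsKrewerasWord.exists_eq_cons_append hn hw'
  rw [pro_cons_append hX hp hpX, pro_cons_append hX' hp' hpX'] at h
  obtain ⟨hbody, hXX'⟩ := List.append_inj' h rfl
  obtain rfl : X = X' := by simpa using hXX'
  obtain ⟨rfl, rfl⟩ := eq_of_append_cons_eq hX hw.isBallot hw'.isBallot hpX hpX' hbody
  rfl

/-- Promotion sends Kreweras words of length `3n` to Kreweras words of length `3n`,
and is a bijection on the set of Kreweras words of length `3n`. -/
theorem promotion_bijection (n : ℕ) (hn : 1 ≤ n) :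
    (∀ w : List KLetter, IsKrewerasWord n w → IsKrewerasWord n (pro w)) ∧
    Set.BijOn pro {w : List KLetter | IsKrewerasWord n w}
      {w : List KLetter | IsKrewerasWord n w} := by
  have hmaps : Set.MapsTo pro {w | IsKrewerasWord n w} {w | IsKrewerasWord n w} :=
    fun _ hw => IsKrewerasWord.pro hn hw
  have hfin : {w | IsKrewerasWord n w}.Finite :=
    (List.finite_length_eq KLetter (3 * n)).subset fun _ hw => hw.1
  exact ⟨hmaps, (hfin.injOn_iff_bijOn_of_mapsTo hmaps).mp (pro_injOn hn)⟩
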